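/- arXiv:2201.05882 — 3 statements merged into one kernel-verified Lean document; each statement's English description precedes it below -/
import Mathlib

section
/- For every real T ≥ 0 and every integer g ≥ 2, the series Σ_{λ ∈ Λ_r^B} exp(−(T/2) c_λ^B) (d_λ^B)^{2−2g} converges for every integer r ≥ 1, and lim_{r→∞} Σ_{λ ∈ Λ_r^B} exp(−(T/2) c_λ^B) (d_λ^B)^{2−2g} = 1. (This is the higher-genus Yang–Mills partition function limit for the odd orthogonal groups SO(2r+1).) -/
open Filter

/-- The Casimir eigenvalue `c_λ^B = (1/(2r+1)) Σ_{i=1}^r λ_i (λ_i + 2r + 1 - 2i)`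
for a dominant weight `λ` of type `B_r` (indices here are 0-based). -/
noncomputable def casimirB (r : ℕ) (lam : Fin r → ℕ) : ℝ :=
  (1 / (2 * (r : ℝ) + 1)) *
    ∑ i : Fin r, (lam i : ℝ) * ((lam i : ℝ) + 2 * (r : ℝ) + 1 - 2 * (((i : ℕ) : ℝ) + 1))

/-- The dimension `d_λ^B = ∏_{1≤i<j≤r} (λ_i - λ_j + j - i)/(j - i) ·
∏_{1≤i≤j≤r} (λ_i + λ_j + 2r + 1 - i - j)/(2r + 1 - i - j)` of the irreducible
representation of `SO(2r+1)` with highest weight `λ` (indices here are 0-based). -/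
noncomputable def dimB (r : ℕ) (lam : Fin r → ℕ) : ℝ :=
  (∏ i : Fin r, ∏ j ∈ Finset.Ioi i,
      (((lam i : ℝ) - (lam j : ℝ) + ((j : ℕ) : ℝ) - ((i : ℕ) : ℝ)) /
        (((j : ℕ) : ℝ) - ((i : ℕ) : ℝ)))) *
    ∏ i : Fin r, ∏ j ∈ Finset.Ici i,
      (((lam i : ℝ) + (lam j : ℝ) + 2 * (r : ℝ) + 1 - (((i : ℕ) : ℝ) + 1) -
          (((j : ℕ) : ℝ) + 1)) /
        (2 * (r : ℝ) + 1 - (((i : ℕ) : ℝ) + 1) - (((j : ℕ) : ℝ) + 1)))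

noncomputable def gprod (n : ℕ) (c : ℝ) (b : ℕ) : ℝ :=
  ∏ t ∈ Finset.range b, (((n : ℝ) + c + t) / (c + t))

lemma gprod_zero (n : ℕ) (c : ℝ) : gprod n c 0 = 1 := by simp [gprod]

lemma gprod_pos {c : ℝ} (hc : 0 < c) (n b : ℕ) : 0 < gprod n c b := by
  apply Finset.prod_pos
  intro t _
  have h1 : (0:ℝ) < c + t := by positivity
  positivity

lemma one_le_gprod {c : ℝ} (hc : 0 < c) (n b : ℕ) : 1 ≤ gprod n c b := by
  unfold gprod
  calc (1:ℝ) = ∏ t ∈ Finset.range b, 1 := by simp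
  _ ≤ _ := by
    apply Finset.prod_le_prod (by simp)
    intro t _
    have h1 : (0:ℝ) < c + t := by positivity
    rw [le_div_iff₀ h1]
    have : (0:ℝ) ≤ (n:ℝ) := by positivity
    linarith

lemma l2 {n : ℕ} (hn : 1 ≤ n) {c : ℝ} (hc : 1 ≤ c) (b : ℕ) :
    (c + b) / c ≤ gprod n c b := by
  induction b with
  | zero =>
    simp only [Nat.cast_zero, add_zero, gprod, Finset.range_zero, Finset.prod_empty]
    rw [div_self (by linarith)]
  | succ b ih =>
    have hc0 : (0:ℝ) < c := by linarith
    have hcb : (0:ℝ) < c + b := by positivity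
    have hn1 : (1:ℝ) ≤ (n:ℝ) := by exact_mod_cast hn
    rw [gprod, Finset.prod_range_succ, ← gprod]
    have h2 : (c + b) / c * (((n:ℝ) + c + b) / (c + b)) ≤ gprod n c b * (((n:ℝ) + c + b) / (c + b)) := by
      apply mul_le_mul_of_nonneg_right ih
      positivity
    refine le_trans ?_ h2
    rw [div_mul_div_comm, div_le_div_iff₀ (by positivity) (by positivity)]
    push_cast
    nlinarith [mul_nonneg (mul_nonneg (sub_nonneg.2 hn1) hc0.le) hcb.le]
 
lemma l1 {n : ℕ} (hn : 1 ≤ n) {b : ℕ} (hb : 1 ≤ b) :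
    ((n:ℝ) + 1) * ((b:ℝ) + 1) / 2 ≤ gprod n 1 b := by
  induction b, hb using Nat.le_induction with
  | base =>
    have hn1 : (1:ℝ) ≤ (n:ℝ) := by exact_mod_cast hn
    simp only [gprod, Finset.range_one, Finset.prod_singleton, Nat.cast_zero, add_zero,
      Nat.cast_one]
    rw [div_one]
    linarith
  | succ b hb ih =>
    have hn1 : (1:ℝ) ≤ (n:ℝ) := by exact_mod_cast hn
    have hb1 : (1:ℝ) ≤ (b:ℝ) := by exact_mod_cast hb
    rw [gprod, Finset.prod_range_succ, ← gprod]
    have h2 : ((n:ℝ) + 1) * ((b:ℝ) + 1) / 2 * (((n:ℝ) + 1 + b) / (1 + b)) ≤ gprod n 1 b * (((n:ℝ) + 1 + b) / (1 + b)) := by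
      apply mul_le_mul_of_nonneg_right ih
      positivity
    refine le_trans ?_ h2
    push_cast
    rw [div_mul_div_comm, le_div_iff₀ (by positivity)]
    nlinarith [mul_nonneg (mul_nonneg (sub_nonneg.2 hn1) (by positivity : (0:ℝ) ≤ (n:ℝ)+1)) (by positivity : (0:ℝ) ≤ (b:ℝ)+1)]

lemma key (r : ℕ) (k : Fin r) (n : ℕ) (hn : 1 ≤ n) :
    ((r:ℝ) + 1) * ((n:ℝ) + 1) / 4 ≤
      gprod n 1 (r - 1 - (k : ℕ)) * gprod n (2*(r:ℝ) - 1 - 2*((k:ℕ):ℝ)) ((k:ℕ) + 1) := by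
  have hk : (k:ℕ) < r := k.2
  have hn1 : (1:ℝ) ≤ (n:ℝ) := by exact_mod_cast hn
  rcases Nat.lt_or_ge ((k:ℕ) + 1) r with hlt | hge
  · set a : ℕ := r - 1 - (k:ℕ) with hadef
    have ha : 1 ≤ a := by omega
    have hacast : (a:ℝ) = (r:ℝ) - 1 - ((k:ℕ):ℝ) := by
      have h0 : a + 1 + (k:ℕ) = r := by omega
      have := congrArg (fun m : ℕ => (m:ℝ)) h0
      push_cast at this
      linarith
    have hc : (1:ℝ) ≤ 2*(r:ℝ) - 1 - 2*((k:ℕ):ℝ) := by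
      have : ((k:ℕ):ℝ) + 2 ≤ (r:ℝ) := by exact_mod_cast hlt
      linarith
    have h1 := l1 hn ha
    have h2 := l2 hn hc ((k:ℕ) + 1)
    have hgp2pos : (0:ℝ) < gprod n (2*(r:ℝ) - 1 - 2*((k:ℕ):ℝ)) ((k:ℕ)+1) := gprod_pos (by linarith) _ _
    calc ((r:ℝ) + 1) * ((n:ℝ) + 1) / 4
        ≤ (((n:ℝ) + 1) * ((a:ℝ) + 1) / 2) *
            ((2*(r:ℝ) - 1 - 2*((k:ℕ):ℝ) + (((k:ℕ):ℝ) + 1)) / (2*(r:ℝ) - 1 - 2*((k:ℕ):ℝ))) := by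
          rw [div_mul_div_comm, div_le_div_iff₀ (by norm_num) (by linarith)]
          push_cast
          have hr : (r:ℝ) = (a:ℝ) + ((k:ℕ):ℝ) + 1 := by linarith
          rw [hr]
          have hN0 : (0:ℝ) ≤ (n:ℝ) + 1 := by positivity
          have ha0 : (0:ℝ) ≤ (a:ℝ) := by positivity
          have hk0 : (0:ℝ) ≤ ((k:ℕ):ℝ) := by positivity
          nlinarith [mul_nonneg hN0 (sq_nonneg ((a:ℝ))), mul_nonneg hN0 ha0,
            mul_nonneg hN0 hk0, mul_nonneg (mul_nonneg hN0 ha0) hk0]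
      _ ≤ _ := by
          apply mul_le_mul h1 ?_ ?_ (le_of_lt (gprod_pos one_pos _ _))
          · push_cast at h2 ⊢; linarith
          · positivity
  · have hk1 : (k:ℕ) + 1 = r := by omega
    have hb0 : r - 1 - (k:ℕ) = 0 := by omega
    have hc1 : 2*(r:ℝ) - 1 - 2*((k:ℕ):ℝ) = 1 := by
      have : ((k:ℕ):ℝ) + 1 = (r:ℝ) := by exact_mod_cast hk1
      linarith
    rw [hb0, hc1]
    have h1 := l1 hn (b := (k:ℕ) + 1) (by omega)
    have hmain : ((r:ℝ) + 1) * ((n:ℝ) + 1) / 4 ≤ ((n:ℝ)+1) * (((k:ℕ):ℝ) + 1 + 1) / 2 := by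
      have : ((k:ℕ):ℝ) + 1 = (r:ℝ) := by exact_mod_cast hk1
      nlinarith
    rw [gprod_zero, one_mul]
    refine le_trans hmain ?_
    refine le_trans ?_ h1
    push_cast
    linarith


def mu (r : ℕ) (lam : Fin r → ℕ) (k : Fin r) : ℕ :=
  lam k - (if h : (k : ℕ) + 1 < r then lam ⟨(k : ℕ) + 1, h⟩ else 0)

section
variable {r : ℕ} {lam : Fin r → ℕ} (hlam : Antitone lam)

lemma casimirB_nonneg : 0 ≤ casimirB r lam := by
  unfold casimirB
  apply mul_nonneg (by positivity)
  apply Finset.sum_nonneg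
  intro i _
  have hi : ((i : ℕ) : ℝ) ≤ (r : ℝ) - 1 := by
    have := i.2
    have : ((i:ℕ):ℝ) + 1 ≤ (r:ℝ) := by exact_mod_cast this
    linarith
  have h0 : (0:ℝ) ≤ (lam i : ℝ) := by positivity
  nlinarith

include hlam in
lemma one_le_dimB : 1 ≤ dimB r lam := by
  unfold dimB
  have h1 : (1:ℝ) ≤ ∏ i : Fin r, ∏ j ∈ Finset.Ioi i,
      (((lam i : ℝ) - (lam j : ℝ) + ((j : ℕ) : ℝ) - ((i : ℕ) : ℝ)) /
        (((j : ℕ) : ℝ) - ((i : ℕ) : ℝ))) := by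
    calc (1:ℝ) = ∏ i : Fin r, ∏ j ∈ Finset.Ioi i, 1 := by simp
    _ ≤ _ := by
      apply Finset.prod_le_prod (by simp) 
      intro i _
      apply Finset.prod_le_prod (by simp)
      intro j hj
      have hij : i < j := Finset.mem_Ioi.1 hj
      have hij' : ((i:ℕ):ℝ) < ((j:ℕ):ℝ) := by exact_mod_cast hij
      rw [le_div_iff₀ (by linarith)]
      have : (lam j : ℝ) ≤ (lam i : ℝ) := by exact_mod_cast hlam hij.le
      linarith
  have h2 : (1:ℝ) ≤ ∏ i : Fin r, ∏ j ∈ Finset.Ici i,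
      (((lam i : ℝ) + (lam j : ℝ) + 2 * (r : ℝ) + 1 - (((i : ℕ) : ℝ) + 1) -
          (((j : ℕ) : ℝ) + 1)) /
        (2 * (r : ℝ) + 1 - (((i : ℕ) : ℝ) + 1) - (((j : ℕ) : ℝ) + 1))) := by
    calc (1:ℝ) = ∏ i : Fin r, ∏ j ∈ Finset.Ici i, 1 := by simp
    _ ≤ _ := by
      apply Finset.prod_le_prod (by simp)
      intro i _
      apply Finset.prod_le_prod (by simp)
      intro j hj
      have hjr : ((j:ℕ):ℝ) + 1 ≤ (r:ℝ) := by exact_mod_cast j.2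
      have hij : ((i:ℕ):ℝ) ≤ ((j:ℕ):ℝ) := by exact_mod_cast (Finset.mem_Ici.1 hj)
      have hden : (0:ℝ) < 2 * (r : ℝ) + 1 - (((i : ℕ) : ℝ) + 1) - (((j : ℕ) : ℝ) + 1) := by
        linarith
      rw [le_div_iff₀ hden]
      have h0i : (0:ℝ) ≤ (lam i : ℝ) := by positivity
      have h0j : (0:ℝ) ≤ (lam j : ℝ) := by positivity
      linarith
  nlinarith

lemma dimB_pos' : (0:ℝ) < dimB r lam ∨ True := Or.inr trivial

include hlam in
lemma mu_add_le {i j : Fin r} (hij : i < j) : mu r lam i + lam j ≤ lam i := by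
  have h1 : (i:ℕ) + 1 < r := lt_of_le_of_lt (Nat.succ_le_of_lt hij) j.2
  have h2 : lam j ≤ lam ⟨(i:ℕ)+1, h1⟩ := hlam (by exact Nat.succ_le_of_lt hij : (⟨(i:ℕ)+1, h1⟩ : Fin r) ≤ j)
  have h3 : lam ⟨(i:ℕ)+1, h1⟩ ≤ lam i := hlam (by exact Nat.le_succ _ : i ≤ ⟨(i:ℕ)+1, h1⟩)
  unfold mu
  rw [dif_pos h1]
  omega

lemma mu_le (k : Fin r) : mu r lam k ≤ lam k := Nat.sub_le _ _

lemma gprodA_eq (n : ℕ) (i : Fin r) :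
    ∏ j ∈ Finset.Ioi i, (((n:ℝ) + ((j : ℕ) : ℝ) - ((i : ℕ) : ℝ)) / (((j : ℕ) : ℝ) - ((i : ℕ) : ℝ)))
      = gprod n 1 (r - 1 - (i:ℕ)) := by
  unfold gprod
  refine Finset.prod_bij' (fun j _ => (j:ℕ) - (i:ℕ) - 1)
    (fun t ht => ⟨(i:ℕ) + 1 + t, by have := Finset.mem_range.1 ht; omega⟩) ?_ ?_ ?_ ?_ ?_
  · intro j hj
    have hij : (i:ℕ) < (j:ℕ) := Fin.lt_def.1 (Finset.mem_Ioi.1 hj)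
    have hjr := j.2
    rw [Finset.mem_range]
    omega
  · intro t ht
    have := Finset.mem_range.1 ht
    rw [Finset.mem_Ioi, Fin.lt_def]
    dsimp only
    omega
  · intro j hj
    have hij : (i:ℕ) < (j:ℕ) := Fin.lt_def.1 (Finset.mem_Ioi.1 hj)
    apply Fin.ext
    dsimp only
    omega
  · intro t ht
    dsimp only
    omega
  · intro j hj
    have hij : (i:ℕ) < (j:ℕ) := Fin.lt_def.1 (Finset.mem_Ioi.1 hj)
    have h1 : ((i:ℕ):ℝ) + 1 + (((j:ℕ) - (i:ℕ) - 1 : ℕ):ℝ) = ((j:ℕ):ℝ) := by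
      have h0 : (i:ℕ) + 1 + ((j:ℕ) - (i:ℕ) - 1) = (j:ℕ) := by omega
      exact_mod_cast congrArg (fun m : ℕ => (m:ℝ)) h0
    rw [show ((n:ℝ) + 1 + (((j:ℕ) - (i:ℕ) - 1 : ℕ):ℝ)) / (1 + (((j:ℕ) - (i:ℕ) - 1 : ℕ):ℝ))
        = ((n:ℝ) + (((i:ℕ):ℝ) + 1 + (((j:ℕ) - (i:ℕ) - 1 : ℕ):ℝ)) - (i:ℕ)) / ((((i:ℕ):ℝ) + 1 + (((j:ℕ) - (i:ℕ) - 1 : ℕ):ℝ)) - (i:ℕ)) by ring_nf]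
    rw [h1]

lemma gprodB_eq (n : ℕ) (j : Fin r) :
    ∏ i ∈ Finset.Iic j, (((n:ℝ) + (2 * (r : ℝ) + 1 - (((i : ℕ) : ℝ) + 1) - (((j : ℕ) : ℝ) + 1))) /
        (2 * (r : ℝ) + 1 - (((i : ℕ) : ℝ) + 1) - (((j : ℕ) : ℝ) + 1)))
      = gprod n (2 * (r:ℝ) - 1 - 2 * ((j:ℕ):ℝ)) ((j:ℕ) + 1) := by
  have hjr := j.2
  unfold gprod
  refine Finset.prod_bij' (fun i _ => (j:ℕ) - (i:ℕ))
    (fun t ht => ⟨(j:ℕ) - t, by omega⟩) ?_ ?_ ?_ ?_ ?_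
  · intro i hi
    have hij : (i:ℕ) ≤ (j:ℕ) := Fin.le_def.1 (Finset.mem_Iic.1 hi)
    rw [Finset.mem_range]
    omega
  · intro t ht
    rw [Finset.mem_Iic, Fin.le_def]
    dsimp only
    omega
  · intro i hi
    have hij : (i:ℕ) ≤ (j:ℕ) := Fin.le_def.1 (Finset.mem_Iic.1 hi)
    apply Fin.ext
    dsimp only
    omega
  · intro t ht
    have := Finset.mem_range.1 ht
    dsimp only
    omega
  · intro i hi
    have hij : (i:ℕ) ≤ (j:ℕ) := Fin.le_def.1 (Finset.mem_Iic.1 hi)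
    have h1 : (((j:ℕ) - (i:ℕ) : ℕ):ℝ) = ((j:ℕ):ℝ) - ((i:ℕ):ℝ) := Nat.cast_sub hij
    rw [h1]
    ring_nf

include hlam in
lemma prod1_ge : ∏ i : Fin r, gprod (mu r lam i) 1 (r - 1 - (i:ℕ)) ≤
    ∏ i : Fin r, ∏ j ∈ Finset.Ioi i,
      (((lam i : ℝ) - (lam j : ℝ) + ((j : ℕ) : ℝ) - ((i : ℕ) : ℝ)) /
        (((j : ℕ) : ℝ) - ((i : ℕ) : ℝ))) := by
  apply Finset.prod_le_prod
  · intro i _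
    apply le_of_lt
    apply Finset.prod_pos
    intro t _
    have h1 : (0:ℝ) < 1 + (t:ℝ) := by positivity
    positivity
  · intro i _
    rw [← gprodA_eq (r := r) (mu r lam i) i]
    apply Finset.prod_le_prod
    · intro j hj
      have hij : i < j := Finset.mem_Ioi.1 hj
      have hij' : ((i:ℕ):ℝ) < ((j:ℕ):ℝ) := by exact_mod_cast (Fin.lt_def.1 hij)
      have hn : (0:ℝ) ≤ ((mu r lam i : ℕ):ℝ) := by positivity
      apply div_nonneg (by linarith) (by linarith)
    · intro j hj
      have hij : i < j := Finset.mem_Ioi.1 hj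
      have hij' : ((i:ℕ):ℝ) < ((j:ℕ):ℝ) := by exact_mod_cast (Fin.lt_def.1 hij)
      have hden : (0:ℝ) < ((j:ℕ):ℝ) - ((i:ℕ):ℝ) := by linarith
      have hnum : ((mu r lam i : ℕ):ℝ) + ((j:ℕ):ℝ) - ((i:ℕ):ℝ)
          ≤ ((lam i : ℕ):ℝ) - ((lam j : ℕ):ℝ) + ((j:ℕ):ℝ) - ((i:ℕ):ℝ) := by
        have h2 := mu_add_le hlam hij
        have h3 : ((mu r lam i + lam j : ℕ):ℝ) ≤ ((lam i : ℕ):ℝ) := Nat.cast_le.2 h2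
        push_cast at h3
        linarith
      exact div_le_div_of_nonneg_right hnum hden.le

lemma prod2_ge : ∏ j : Fin r, gprod (mu r lam j) (2 * (r:ℝ) - 1 - 2 * ((j:ℕ):ℝ)) ((j:ℕ) + 1) ≤
    ∏ i : Fin r, ∏ j ∈ Finset.Ici i,
      (((lam i : ℝ) + (lam j : ℝ) + 2 * (r : ℝ) + 1 - (((i : ℕ) : ℝ) + 1) -
          (((j : ℕ) : ℝ) + 1)) /
        (2 * (r : ℝ) + 1 - (((i : ℕ) : ℝ) + 1) - (((j : ℕ) : ℝ) + 1))) := by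
  have hswap : ∏ i : Fin r, ∏ j ∈ Finset.Ici i,
      (((mu r lam j : ℕ):ℝ) + (2 * (r : ℝ) + 1 - (((i : ℕ) : ℝ) + 1) - (((j : ℕ) : ℝ) + 1))) /
        (2 * (r : ℝ) + 1 - (((i : ℕ) : ℝ) + 1) - (((j : ℕ) : ℝ) + 1))
      = ∏ j : Fin r, ∏ i ∈ Finset.Iic j,
      (((mu r lam j : ℕ):ℝ) + (2 * (r : ℝ) + 1 - (((i : ℕ) : ℝ) + 1) - (((j : ℕ) : ℝ) + 1))) /
        (2 * (r : ℝ) + 1 - (((i : ℕ) : ℝ) + 1) - (((j : ℕ) : ℝ) + 1)) := by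
    apply Finset.prod_comm'
    intro x y
    simp [Finset.mem_Ici, Finset.mem_Iic]
  have hstep : ∏ j : Fin r, gprod (mu r lam j) (2 * (r:ℝ) - 1 - 2 * ((j:ℕ):ℝ)) ((j:ℕ) + 1)
      = ∏ i : Fin r, ∏ j ∈ Finset.Ici i,
      (((mu r lam j : ℕ):ℝ) + (2 * (r : ℝ) + 1 - (((i : ℕ) : ℝ) + 1) - (((j : ℕ) : ℝ) + 1))) /
        (2 * (r : ℝ) + 1 - (((i : ℕ) : ℝ) + 1) - (((j : ℕ) : ℝ) + 1)) := by
    rw [hswap]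
    apply Finset.prod_congr rfl
    intro j _
    rw [gprodB_eq (mu r lam j) j]
  rw [hstep]
  apply Finset.prod_le_prod
  · intro i _
    apply Finset.prod_nonneg
    intro j hj
    have hij : (i:ℕ) ≤ (j:ℕ) := Fin.le_def.1 (Finset.mem_Ici.1 hj)
    have hjr : ((j:ℕ):ℝ) + 1 ≤ (r:ℝ) := by exact_mod_cast j.2
    have hden : (0:ℝ) < 2 * (r : ℝ) + 1 - (((i : ℕ) : ℝ) + 1) - (((j : ℕ) : ℝ) + 1) := by
      have : ((i:ℕ):ℝ) ≤ ((j:ℕ):ℝ) := by exact_mod_cast hij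
      linarith
    have hn : (0:ℝ) ≤ ((mu r lam j : ℕ):ℝ) := by positivity
    apply div_nonneg (by linarith) hden.le
  · intro i _
    apply Finset.prod_le_prod
    · intro j hj
      have hij : (i:ℕ) ≤ (j:ℕ) := Fin.le_def.1 (Finset.mem_Ici.1 hj)
      have hjr : ((j:ℕ):ℝ) + 1 ≤ (r:ℝ) := by exact_mod_cast j.2
      have hden : (0:ℝ) < 2 * (r : ℝ) + 1 - (((i : ℕ) : ℝ) + 1) - (((j : ℕ) : ℝ) + 1) := by
        have : ((i:ℕ):ℝ) ≤ ((j:ℕ):ℝ) := by exact_mod_cast hij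
        linarith
      have hn : (0:ℝ) ≤ ((mu r lam j : ℕ):ℝ) := by positivity
      apply div_nonneg (by linarith) hden.le
    · intro j hj
      have hij : (i:ℕ) ≤ (j:ℕ) := Fin.le_def.1 (Finset.mem_Ici.1 hj)
      have hjr : ((j:ℕ):ℝ) + 1 ≤ (r:ℝ) := by exact_mod_cast j.2
      have hden : (0:ℝ) < 2 * (r : ℝ) + 1 - (((i : ℕ) : ℝ) + 1) - (((j : ℕ) : ℝ) + 1) := by
        have : ((i:ℕ):ℝ) ≤ ((j:ℕ):ℝ) := by exact_mod_cast hij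
        linarith
      have hnum : ((mu r lam j : ℕ):ℝ) + (2 * (r : ℝ) + 1 - (((i : ℕ) : ℝ) + 1) - (((j : ℕ) : ℝ) + 1))
          ≤ (lam i : ℝ) + (lam j : ℝ) + 2 * (r : ℝ) + 1 - (((i : ℕ) : ℝ) + 1) - (((j : ℕ) : ℝ) + 1) := by
        have h2 : ((mu r lam j : ℕ):ℝ) ≤ ((lam j : ℕ):ℝ) := Nat.cast_le.2 (mu_le j)
        have h0 : (0:ℝ) ≤ ((lam i : ℕ):ℝ) := by positivity
        linarith
      have h5 := div_le_div_of_nonneg_right hnum hden.le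
      refine h5.trans_eq ?_
      ring_nf
end

noncomputable def cf (r n : ℕ) : ℝ := if n = 0 then 1 else ((r:ℝ) + 1) * ((n:ℝ) + 1) / 4

noncomputable def wf (r n : ℕ) : ℝ := ((cf r n) ^ 2)⁻¹

lemma cf_pos (r n : ℕ) : 0 < cf r n := by
  unfold cf
  split
  · norm_num
  · positivity

lemma wf_pos (r n : ℕ) : 0 < wf r n := by
  have := cf_pos r n
  unfold wf
  positivity

section
variable {r : ℕ} {lam : Fin r → ℕ} (hlam : Antitone lam)

include hlam in
lemma cprod_le_dimB : ∏ k : Fin r, cf r (mu r lam k) ≤ dimB r lam := by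
  have hA : ∀ k : Fin r, 0 < gprod (mu r lam k) 1 (r - 1 - (k:ℕ)) := fun k => gprod_pos one_pos _ _
  have hcpos : ∀ k : Fin r, (0:ℝ) < 2 * (r:ℝ) - 1 - 2 * ((k:ℕ):ℝ) := by
    intro k
    have : ((k:ℕ):ℝ) + 1 ≤ (r:ℝ) := by exact_mod_cast k.2
    linarith
  have hB : ∀ k : Fin r, 0 < gprod (mu r lam k) (2 * (r:ℝ) - 1 - 2 * ((k:ℕ):ℝ)) ((k:ℕ) + 1) :=
    fun k => gprod_pos (hcpos k) _ _
  have step1 : ∏ k : Fin r, cf r (mu r lam k) ≤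
      ∏ k : Fin r, (gprod (mu r lam k) 1 (r - 1 - (k:ℕ)) *
        gprod (mu r lam k) (2 * (r:ℝ) - 1 - 2 * ((k:ℕ):ℝ)) ((k:ℕ) + 1)) := by
    apply Finset.prod_le_prod
    · intro k _; exact (cf_pos r _).le
    · intro k _
      rcases Nat.eq_zero_or_pos (mu r lam k) with h0 | h1
      · rw [cf, if_pos h0]
        have := one_le_gprod one_pos (mu r lam k) (r - 1 - (k:ℕ))
        have := one_le_gprod (hcpos k) (mu r lam k) ((k:ℕ) + 1)
        nlinarith
      · rw [cf, if_neg (Nat.pos_iff_ne_zero.1 h1)]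
        exact key r k (mu r lam k) h1
  refine step1.trans ?_
  rw [Finset.prod_mul_distrib]
  unfold dimB
  have h1 := prod1_ge hlam
  have h2 := prod2_ge (r := r) (lam := lam)
  have hApos : (0:ℝ) < ∏ k : Fin r, gprod (mu r lam k) 1 (r - 1 - (k:ℕ)) :=
    Finset.prod_pos (fun k _ => hA k)
  have hBpos : (0:ℝ) < ∏ k : Fin r, gprod (mu r lam k) (2 * (r:ℝ) - 1 - 2 * ((k:ℕ):ℝ)) ((k:ℕ) + 1) :=
    Finset.prod_pos (fun k _ => hB k)
  apply mul_le_mul h1 h2 hBpos.le (le_trans hApos.le h1)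

include hlam in
lemma term_le_wprod (T : ℝ) (hT : 0 ≤ T) (g : ℕ) (hg : 2 ≤ g) :
    Real.exp (-(T / 2) * casimirB r lam) * dimB r lam ^ (2 - 2 * (g : ℤ)) ≤
      ∏ k : Fin r, wf r (mu r lam k) := by
  have hd1 : (1:ℝ) ≤ dimB r lam := one_le_dimB hlam
  have hdpos : (0:ℝ) < dimB r lam := lt_of_lt_of_le one_pos hd1
  have hexp : Real.exp (-(T / 2) * casimirB r lam) ≤ 1 := by
    rw [Real.exp_le_one_iff, neg_mul, neg_nonpos]
    exact mul_nonneg (by linarith) (casimirB_nonneg (r := r) (lam := lam))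
  have hz : (2 - 2 * (g : ℤ)) ≤ -2 := by omega
  have hzle : dimB r lam ^ (2 - 2 * (g : ℤ)) ≤ dimB r lam ^ (-2 : ℤ) :=
    zpow_le_zpow_right₀ hd1 hz
  have hP : (0:ℝ) < ∏ k : Fin r, cf r (mu r lam k) := Finset.prod_pos fun k _ => cf_pos r _
  have hPd : ∏ k : Fin r, cf r (mu r lam k) ≤ dimB r lam := cprod_le_dimB hlam
  have hsq : (∏ k : Fin r, cf r (mu r lam k)) ^ 2 ≤ dimB r lam ^ 2 :=
    pow_le_pow_left₀ hP.le hPd 2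
  have hinv : (dimB r lam ^ 2)⁻¹ ≤ ((∏ k : Fin r, cf r (mu r lam k)) ^ 2)⁻¹ := by
    apply inv_anti₀ (by positivity) hsq
  have heq : ((∏ k : Fin r, cf r (mu r lam k)) ^ 2)⁻¹ = ∏ k : Fin r, wf r (mu r lam k) := by
    unfold wf
    rw [← Finset.prod_pow, ← Finset.prod_inv_distrib]
  have hzpow : dimB r lam ^ (-2 : ℤ) = (dimB r lam ^ 2)⁻¹ := by
    rw [zpow_neg]
    norm_cast
  calc Real.exp (-(T / 2) * casimirB r lam) * dimB r lam ^ (2 - 2 * (g : ℤ))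
      ≤ 1 * dimB r lam ^ (2 - 2 * (g : ℤ)) := by
        apply mul_le_mul_of_nonneg_right hexp (le_of_lt (zpow_pos hdpos _))
    _ = dimB r lam ^ (2 - 2 * (g : ℤ)) := one_mul _
    _ ≤ dimB r lam ^ (-2 : ℤ) := hzle
    _ = (dimB r lam ^ 2)⁻¹ := hzpow
    _ ≤ ((∏ k : Fin r, cf r (mu r lam k)) ^ 2)⁻¹ := hinv
    _ = ∏ k : Fin r, wf r (mu r lam k) := heq

end

lemma mu_inj {r : ℕ} {l l' : Fin r → ℕ} (hl : Antitone l) (hl' : Antitone l')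
    (h : mu r l = mu r l') : l = l' := by
  suffices H : ∀ m, ∀ k : Fin r, r - (k:ℕ) ≤ m → l k = l' k by
    funext k
    exact H r k (by omega)
  intro m
  induction m with
  | zero => intro k hk; exact absurd hk (by have := k.2; omega)
  | succ m ih =>
    intro k hk
    have hmu := congrFun h k
    unfold mu at hmu
    by_cases hk1 : (k:ℕ) + 1 < r
    · simp only [dif_pos hk1] at hmu
      have hnext : l ⟨(k:ℕ)+1, hk1⟩ = l' ⟨(k:ℕ)+1, hk1⟩ := by
        apply ih ⟨(k:ℕ)+1, hk1⟩
        simp only [Fin.val_mk]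
        omega
      have h1 : l ⟨(k:ℕ)+1, hk1⟩ ≤ l k := hl (by rw [Fin.le_def]; dsimp only; omega)
      have h2 : l' ⟨(k:ℕ)+1, hk1⟩ ≤ l' k := hl' (by rw [Fin.le_def]; dsimp only; omega)
      omega
    · simp only [dif_neg hk1] at hmu
      omega

lemma pi_prod_summable_tsum (v : ℕ → ℝ) (hv0 : ∀ n, 0 ≤ v n) (hv : Summable v) (m : ℕ) :
    Summable (fun μ : Fin m → ℕ => ∏ k, v (μ k)) ∧
      (∑' μ : Fin m → ℕ, ∏ k, v (μ k)) = (∑' n, v n) ^ m := by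
  induction m with
  | zero =>
    constructor
    · exact Summable.of_finite
    · rw [pow_zero]
      rw [tsum_eq_single (fun i : Fin 0 => (0:ℕ)) (by
        intro b hb
        exact absurd (Subsingleton.elim b _) hb)]
      simp
  | succ m ih =>
    obtain ⟨hs, ht⟩ := ih
    have hfact : ∀ p : ℕ × (Fin m → ℕ),
        (∏ k : Fin (m+1), v ((Fin.consEquiv (fun _ : Fin (m+1) => ℕ)) p k))
          = v p.1 * ∏ k : Fin m, v (p.2 k) := by
      intro p
      calc ∏ k : Fin (m+1), v ((Fin.consEquiv (fun _ : Fin (m+1) => ℕ)) p k)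
          = ∏ k : Fin (m+1), v (Fin.cons (α := fun _ : Fin (m+1) => ℕ) p.1 p.2 k) :=
            Finset.prod_congr rfl (fun k _ => by rw [Fin.consEquiv_apply])
        _ = v p.1 * ∏ k : Fin m, v (p.2 k) := by
            rw [Fin.prod_univ_succ]
            simp
    have h1 : (0 : ℕ → ℝ) ≤ v := hv0
    have h2 : (0 : (Fin m → ℕ) → ℝ) ≤ (fun μ : Fin m → ℕ => ∏ k : Fin m, v (μ k)) :=
      fun μ => Finset.prod_nonneg fun k _ => hv0 _
    have hsum2 : Summable (fun p : ℕ × (Fin m → ℕ) => v p.1 * ∏ k : Fin m, v (p.2 k)) :=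
      Summable.mul_of_nonneg (f := v) (g := fun μ : Fin m → ℕ => ∏ k : Fin m, v (μ k)) hv hs h1 h2
    have hcomp : Summable ((fun μ : Fin (m+1) → ℕ => ∏ k, v (μ k)) ∘ (Fin.consEquiv (fun _ : Fin (m+1) => ℕ))) :=
      hsum2.congr (fun p => (hfact p).symm)
    constructor
    · exact (Equiv.summable_iff _).1 hcomp
    · rw [← Equiv.tsum_eq (Fin.consEquiv (fun _ : Fin (m+1) => ℕ)) (fun μ : Fin (m+1) → ℕ => ∏ k, v (μ k))]
      rw [tsum_congr hfact]
      rw [Summable.tsum_prod' hsum2 (fun b => (hs.mul_left (v b)))]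
      have hinner : ∀ b : ℕ, (∑' c : Fin m → ℕ, v b * ∏ k, v (c k)) = v b * (∑' n, v n) ^ m := by
        intro b
        rw [tsum_mul_left, ht]
      rw [tsum_congr hinner, tsum_mul_right, pow_succ]
      ring

lemma cf_zero (r : ℕ) : cf r 0 = 1 := by simp [cf]

lemma wf_zero (r : ℕ) : wf r 0 = 1 := by simp [wf, cf_zero]

lemma wf_succ_le (r n : ℕ) :
    wf r (n+1) ≤ (16 / (((r:ℝ)+1)^2)) * (1/((n:ℝ)+1) - 1/((n:ℝ)+2)) := by
  have hr1 : (0:ℝ) < (r:ℝ) + 1 := by positivity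
  have hn1 : (0:ℝ) < (n:ℝ) + 1 := by positivity
  have hn2 : (0:ℝ) < (n:ℝ) + 2 := by positivity
  have h1 : wf r (n+1) = 16 / (((r:ℝ)+1)^2 * ((n:ℝ)+2)^2) := by
    unfold wf cf
    rw [if_neg (Nat.succ_ne_zero n)]
    push_cast
    rw [div_pow, ← one_div, one_div_div]
    congr 1
    · norm_num
    · ring
  rw [h1]
  have h2 : 1/((n:ℝ)+1) - 1/((n:ℝ)+2) = 1/(((n:ℝ)+1)*((n:ℝ)+2)) := by
    field_simp
    ring
  rw [h2]
  rw [div_mul_div_comm, mul_one]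
  apply div_le_div_of_nonneg_left (by norm_num) (by positivity)
  have : ((n:ℝ)+1)*((n:ℝ)+2) ≤ ((n:ℝ)+2)^2 := by nlinarith
  nlinarith

lemma wf_partial_claim (r : ℕ) : ∀ N : ℕ,
    ∑ i ∈ Finset.range (N+1), wf r i + (16 / (((r:ℝ)+1)^2)) * (1/((N:ℝ)+1))
      ≤ 1 + 16 / (((r:ℝ)+1)^2) := by
  intro N
  induction N with
  | zero =>
    rw [Finset.sum_range_one, wf_zero]
    norm_num
  | succ N ih =>
    rw [Finset.sum_range_succ]
    have h1 := wf_succ_le r N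
    have hK : (0:ℝ) ≤ 16 / (((r:ℝ)+1)^2) := by positivity
    push_cast
    have hNN : ((N:ℝ) + 1 + 1) = (N:ℝ) + 2 := by ring
    rw [hNN]
    linarith

lemma wf_partial_le (r : ℕ) : ∀ N : ℕ,
    ∑ i ∈ Finset.range N, wf r i ≤ 1 + 16 / (((r:ℝ)+1)^2) := by
  intro N
  match N with
  | 0 => simp; positivity
  | (M+1) =>
    have := wf_partial_claim r M
    have hK : (0:ℝ) ≤ (16 / (((r:ℝ)+1)^2)) * (1/((M:ℝ)+1)) := by positivity
    linarith

lemma wf_summable (r : ℕ) : Summable (wf r) :=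
  summable_of_sum_range_le (fun n => (wf_pos r n).le) (wf_partial_le r)

lemma wf_tsum_le (r : ℕ) : ∑' n, wf r n ≤ 1 + 16 / (((r:ℝ)+1)^2) :=
  Summable.tsum_le_of_sum_range_le (wf_summable r) (wf_partial_le r)

lemma casimirB_zero (r : ℕ) : casimirB r (fun _ => 0) = 0 := by
  simp [casimirB]

lemma dimB_zero (r : ℕ) : dimB r (fun _ => 0) = 1 := by
  have h1 : (∏ i : Fin r, ∏ j ∈ Finset.Ioi i,
      ((((0:ℕ):ℝ) - ((0:ℕ):ℝ) + ((j:ℕ):ℝ) - ((i:ℕ):ℝ)) / (((j:ℕ):ℝ) - ((i:ℕ):ℝ)))) = 1 := by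
    apply Finset.prod_eq_one
    intro i _
    apply Finset.prod_eq_one
    intro j hj
    have hij : (i:ℕ) < (j:ℕ) := Fin.lt_def.1 (Finset.mem_Ioi.1 hj)
    have hij' : ((i:ℕ):ℝ) < ((j:ℕ):ℝ) := by exact_mod_cast hij
    rw [show ((0:ℕ):ℝ) - ((0:ℕ):ℝ) + ((j:ℕ):ℝ) - ((i:ℕ):ℝ) = ((j:ℕ):ℝ) - ((i:ℕ):ℝ) by push_cast; ring]
    exact div_self (by linarith)
  have h2 : (∏ i : Fin r, ∏ j ∈ Finset.Ici i,
      ((((0:ℕ):ℝ) + ((0:ℕ):ℝ) + 2 * (r:ℝ) + 1 - (((i:ℕ):ℝ) + 1) - (((j:ℕ):ℝ) + 1)) /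
        (2 * (r:ℝ) + 1 - (((i:ℕ):ℝ) + 1) - (((j:ℕ):ℝ) + 1)))) = 1 := by
    apply Finset.prod_eq_one
    intro i _
    apply Finset.prod_eq_one
    intro j hj
    have hij : (i:ℕ) ≤ (j:ℕ) := Fin.le_def.1 (Finset.mem_Ici.1 hj)
    have hjr : ((j:ℕ):ℝ) + 1 ≤ (r:ℝ) := by exact_mod_cast j.2
    have hij' : ((i:ℕ):ℝ) ≤ ((j:ℕ):ℝ) := by exact_mod_cast hij
    rw [show ((0:ℕ):ℝ) + ((0:ℕ):ℝ) + 2*(r:ℝ) + 1 - (((i:ℕ):ℝ)+1) - (((j:ℕ):ℝ)+1)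
        = 2*(r:ℝ) + 1 - (((i:ℕ):ℝ)+1) - (((j:ℕ):ℝ)+1) by push_cast; ring]
    exact div_self (by linarith)
  have hcal : dimB r (fun _ => 0) = (∏ i : Fin r, ∏ j ∈ Finset.Ioi i,
      ((((0:ℕ):ℝ) - ((0:ℕ):ℝ) + ((j:ℕ):ℝ) - ((i:ℕ):ℝ)) / (((j:ℕ):ℝ) - ((i:ℕ):ℝ)))) *
      (∏ i : Fin r, ∏ j ∈ Finset.Ici i,
      ((((0:ℕ):ℝ) + ((0:ℕ):ℝ) + 2 * (r:ℝ) + 1 - (((i:ℕ):ℝ) + 1) - (((j:ℕ):ℝ) + 1)) /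
        (2 * (r:ℝ) + 1 - (((i:ℕ):ℝ) + 1) - (((j:ℕ):ℝ) + 1)))) := rfl
  rw [hcal, h1, h2, one_mul]


/-- Higher-genus Yang–Mills partition function limit for `SO(2r+1)` (type `B_r`):
for `g ≥ 2` and `T ≥ 0`, `Z_{g,T,B_r} = Σ_{λ ∈ Λ_r^B} e^{-(T/2) c_λ^B} (d_λ^B)^{2-2g}`
converges for every `r ≥ 1` and tends to `1` as `r → ∞`. -/
theorem higher_genus_partition_function_limit_B (T : ℝ) (hT : 0 ≤ T) (g : ℕ) (hg : 2 ≤ g) :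
    (∀ r : ℕ, 1 ≤ r →
      Summable fun lam : {l : Fin r → ℕ // Antitone l} =>
        Real.exp (-(T / 2) * casimirB r lam.1) * dimB r lam.1 ^ (2 - 2 * (g : ℤ))) ∧
    Tendsto
      (fun r : ℕ => ∑' lam : {l : Fin r → ℕ // Antitone l},
        Real.exp (-(T / 2) * casimirB r lam.1) * dimB r lam.1 ^ (2 - 2 * (g : ℤ)))
      atTop (nhds 1) := by
  have hterm_nonneg : ∀ (r : ℕ) (x : {l : Fin r → ℕ // Antitone l}),
      0 ≤ Real.exp (-(T / 2) * casimirB r x.1) * dimB r x.1 ^ (2 - 2 * (g : ℤ)) := by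
    intro r x
    have hd : (0:ℝ) < dimB r x.1 := lt_of_lt_of_le one_pos (one_le_dimB x.2)
    exact mul_nonneg (Real.exp_pos _).le (zpow_pos hd _).le
  have heinj : ∀ r : ℕ, Function.Injective
      (fun x : {l : Fin r → ℕ // Antitone l} => mu r x.1) := by
    intro r x y hxy
    exact Subtype.ext (mu_inj x.2 y.2 hxy)
  have hGall := fun r : ℕ =>
    pi_prod_summable_tsum (wf r) (fun n => (wf_pos r n).le) (wf_summable r) r
  have hF : ∀ r : ℕ, Summable (fun x : {l : Fin r → ℕ // Antitone l} =>
      ∏ k : Fin r, wf r (mu r x.1 k)) := by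
    intro r
    have h0 : Summable ((fun μ : Fin r → ℕ => ∏ k : Fin r, wf r (μ k)) ∘
        (fun x : {l : Fin r → ℕ // Antitone l} => mu r x.1)) :=
      (hGall r).1.comp_injective (heinj r)
    exact h0
  have hsummable : ∀ r : ℕ, Summable (fun x : {l : Fin r → ℕ // Antitone l} =>
      Real.exp (-(T / 2) * casimirB r x.1) * dimB r x.1 ^ (2 - 2 * (g : ℤ))) := by
    intro r
    exact Summable.of_nonneg_of_le (hterm_nonneg r)
      (fun x => term_le_wprod x.2 T hT g hg) (hF r)
  refine ⟨fun r _ => hsummable r, ?_⟩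
  have hlow : ∀ r : ℕ, (1:ℝ) ≤ ∑' lam : {l : Fin r → ℕ // Antitone l},
      Real.exp (-(T / 2) * casimirB r lam.1) * dimB r lam.1 ^ (2 - 2 * (g : ℤ)) := by
    intro r
    have hterm0 : Real.exp (-(T / 2) * casimirB r (fun _ => 0)) *
        dimB r (fun _ => 0) ^ (2 - 2 * (g : ℤ)) = 1 := by
      rw [casimirB_zero, dimB_zero, mul_zero, Real.exp_zero, one_zpow, one_mul]
    have hle := Summable.le_tsum (hsummable r) ⟨fun _ => 0, antitone_const⟩
      (fun j _ => hterm_nonneg r j)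
    calc (1:ℝ) = Real.exp (-(T / 2) * casimirB r (fun _ => 0)) *
        dimB r (fun _ => 0) ^ (2 - 2 * (g : ℤ)) := hterm0.symm
      _ ≤ _ := hle
  have hup : ∀ r : ℕ, (∑' lam : {l : Fin r → ℕ // Antitone l},
      Real.exp (-(T / 2) * casimirB r lam.1) * dimB r lam.1 ^ (2 - 2 * (g : ℤ)))
        ≤ (1 + 16 / (((r:ℝ)+1)^2)) ^ r := by
    intro r
    have h1 := Summable.tsum_le_tsum_of_inj
      (f := fun x : {l : Fin r → ℕ // Antitone l} =>
        Real.exp (-(T / 2) * casimirB r x.1) * dimB r x.1 ^ (2 - 2 * (g : ℤ)))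
      (g := fun μ : Fin r → ℕ => ∏ k : Fin r, wf r (μ k))
      (fun x : {l : Fin r → ℕ // Antitone l} => mu r x.1)
      (heinj r)
      (fun c _ => Finset.prod_nonneg fun k _ => (wf_pos r _).le)
      (fun x => term_le_wprod x.2 T hT g hg)
      (hsummable r) (hGall r).1
    rw [(hGall r).2] at h1
    have h2 : (∑' n, wf r n) ^ r ≤ (1 + 16/(((r:ℝ)+1)^2)) ^ r :=
      pow_le_pow_left₀ (tsum_nonneg fun n => (wf_pos r n).le) (wf_tsum_le r) r
    linarith
  have hub_le : ∀ r : ℕ, (1 + 16 / (((r:ℝ)+1)^2)) ^ r ≤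
      Real.exp (16 * (r:ℝ) / (((r:ℝ)+1)^2)) := by
    intro r
    have h1 : (1 + 16 / (((r:ℝ)+1)^2)) ≤ Real.exp (16/(((r:ℝ)+1)^2)) := by
      have := Real.add_one_le_exp (16/(((r:ℝ)+1)^2))
      linarith
    calc (1 + 16 / (((r:ℝ)+1)^2)) ^ r ≤ (Real.exp (16/(((r:ℝ)+1)^2))) ^ r :=
          pow_le_pow_left₀ (by positivity) h1 r
      _ = Real.exp (16 * (r:ℝ) / (((r:ℝ)+1)^2)) := by
          rw [← Real.exp_nat_mul]
          congr 1
          ring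
  have hub_ge : ∀ r : ℕ, (1:ℝ) ≤ (1 + 16 / (((r:ℝ)+1)^2)) ^ r := by
    intro r
    apply one_le_pow₀
    have : (0:ℝ) ≤ 16 / (((r:ℝ)+1)^2) := by positivity
    linarith
  have harg : Tendsto (fun r : ℕ => 16 * (r:ℝ) / (((r:ℝ)+1)^2)) atTop (nhds 0) := by
    have h16 : Tendsto (fun r : ℕ => 16 * (1/((r:ℝ)+1))) atTop (nhds 0) := by
      have := tendsto_one_div_add_atTop_nhds_zero_nat.const_mul (16:ℝ)
      simpa using this
    apply tendsto_of_tendsto_of_tendsto_of_le_of_le tendsto_const_nhds h16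
    · intro r
      positivity
    · intro r
      have hr1 : (0:ℝ) < (r:ℝ)+1 := by positivity
      show 16 * (r:ℝ) / (((r:ℝ)+1)^2) ≤ 16 * (1/((r:ℝ)+1))
      rw [div_le_iff₀ (by positivity)]
      have hkey : 16 * (1/((r:ℝ)+1)) * (((r:ℝ)+1)^2) = 16*((r:ℝ)+1) := by
        field_simp
      rw [hkey]
      have h0 : (0:ℝ) ≤ (r:ℝ) := by positivity
      linarith
  have hexp_lim : Tendsto (fun r : ℕ => Real.exp (16 * (r:ℝ) / (((r:ℝ)+1)^2)))
      atTop (nhds 1) := by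
    have := (Real.continuous_exp.tendsto 0).comp harg
    simpa [Function.comp_def] using this
  have hub_lim : Tendsto (fun r : ℕ => (1 + 16 / (((r:ℝ)+1)^2)) ^ r) atTop (nhds 1) :=
    tendsto_of_tendsto_of_tendsto_of_le_of_le tendsto_const_nhds hexp_lim hub_ge hub_le
  exact tendsto_of_tendsto_of_tendsto_of_le_of_le tendsto_const_nhds hub_lim hlow hup
end

section
/- Let r ≥ 2 be an integer and let λ ∈ ℤ^r satisfy λ_1 ≥ λ_2 ≥ ⋯ ≥ λ_{r−1} ≥ |λ_r|. Set λ̃ = (λ_1, …, λ_{r−1}, |λ_r|). Then ∏_{1≤i<j≤r} ((λ_i − λ_j + j − i)(λ_i + λ_j + 2r − i − j))/((j − i)(2r − i − j)) ≥ ∏_{1≤i<j≤r} ((λ̃_i − λ̃_j + j − i)/(j − i)); that is, the dimension of the irreducible representation of SO(2r) with highest weight λ is at least ∏_{1≤i<j≤r} ((λ̃_i − λ̃_j + j − i)/(j − i)). -/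
/-- `λ ∈ ℤ^r` is a dominant weight of type `D_r`: `λ_1 ≥ ⋯ ≥ λ_{r-1} ≥ |λ_r|`
(indices here are 0-based, so the last index `j` satisfies `(j : ℕ) + 1 = r`). -/
def IsDominantD (r : ℕ) (l : Fin r → ℤ) : Prop :=
  ∀ i j : Fin r, i < j →
    (((j : ℕ) + 1 = r → |l j| ≤ l i) ∧ ((j : ℕ) + 1 ≠ r → l j ≤ l i))

/-- `λ̃ = (λ_1, …, λ_{r-1}, |λ_r|)`. -/
def tildeD (r : ℕ) (l : Fin r → ℤ) : Fin r → ℤ :=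
  fun i => if (i : ℕ) + 1 = r then |l i| else l i

lemma tilde_term_nonneg (r : ℕ) (lam : Fin r → ℤ) (hlam : IsDominantD r lam)
    (i j : Fin r) (hij : i < j) :
    0 ≤ (((tildeD r lam i : ℝ) - (tildeD r lam j : ℝ) + ((j : ℕ) : ℝ) - ((i : ℕ) : ℝ)) /
          (((j : ℕ) : ℝ) - ((i : ℕ) : ℝ))) := by
  have hij' : (i : ℕ) < (j : ℕ) := hij
  have hir : (i : ℕ) + 1 ≠ r := by have := j.isLt; omega
  have hti : tildeD r lam i = lam i := by simp [tildeD, hir]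
  have hd : (0 : ℝ) < ((j : ℕ) : ℝ) - ((i : ℕ) : ℝ) := by
    have : ((i : ℕ) : ℝ) < ((j : ℕ) : ℝ) := by exact_mod_cast hij'
    linarith
  have hle : tildeD r lam j ≤ lam i := by
    by_cases h : (j : ℕ) + 1 = r
    · simpa [tildeD, h] using (hlam i j hij).1 h
    · simpa [tildeD, h] using (hlam i j hij).2 h
  have hle' : ((tildeD r lam j : ℤ) : ℝ) ≤ ((lam i : ℤ) : ℝ) := by exact_mod_cast hle
  rw [hti]
  apply div_nonneg _ hd.le
  linarith

lemma term_le (r : ℕ) (lam : Fin r → ℤ) (hlam : IsDominantD r lam)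
    (i j : Fin r) (hij : i < j) :
    (((tildeD r lam i : ℝ) - (tildeD r lam j : ℝ) + ((j : ℕ) : ℝ) - ((i : ℕ) : ℝ)) /
          (((j : ℕ) : ℝ) - ((i : ℕ) : ℝ)))
      ≤ ((((lam i : ℝ) - (lam j : ℝ) + ((j : ℕ) : ℝ) - ((i : ℕ) : ℝ)) *
              ((lam i : ℝ) + (lam j : ℝ) + 2 * (r : ℝ) - (((i : ℕ) : ℝ) + 1) -
                (((j : ℕ) : ℝ) + 1))) /
            ((((j : ℕ) : ℝ) - ((i : ℕ) : ℝ)) *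
              (2 * (r : ℝ) - (((i : ℕ) : ℝ) + 1) - (((j : ℕ) : ℝ) + 1)))) := by
  have hij' : (i : ℕ) < (j : ℕ) := hij
  have hjr : (j : ℕ) < r := j.isLt
  have hir : (i : ℕ) + 1 ≠ r := by omega
  have hti : tildeD r lam i = lam i := by simp [tildeD, hir]
  rw [hti]
  have hd : (0 : ℝ) < ((j : ℕ) : ℝ) - ((i : ℕ) : ℝ) := by
    have : ((i : ℕ) : ℝ) < ((j : ℕ) : ℝ) := by exact_mod_cast hij'
    linarith
  by_cases h : (j : ℕ) + 1 = r
  · -- last column: D = d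
    have htj : ((tildeD r lam j : ℤ) : ℝ) = |(lam j : ℝ)| := by
      simp [tildeD, h, Int.cast_abs]
    have hAB : |(lam j : ℝ)| ≤ (lam i : ℝ) := by
      have := (hlam i j hij).1 h
      rw [← Int.cast_abs]
      exact_mod_cast this
    have hDd : (r : ℝ) = ((j : ℕ) : ℝ) + 1 := by exact_mod_cast h.symm
    have hD : (0 : ℝ) < 2 * (r : ℝ) - (((i : ℕ) : ℝ) + 1) - (((j : ℕ) : ℝ) + 1) := by
      linarith
    rw [htj, div_le_div_iff₀ hd (by positivity), hDd]
    have hB : (0 : ℝ) ≤ |(lam j : ℝ)| := abs_nonneg _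
    have hB2 : |(lam j : ℝ)| ^ 2 = (lam j : ℝ) ^ 2 := sq_abs _
    have key : 0 ≤ (((j : ℕ) : ℝ) - ((i : ℕ) : ℝ)) *
        (((lam i : ℝ) + (((j : ℕ) : ℝ) - ((i : ℕ) : ℝ)) - |(lam j : ℝ)|) *
          ((lam i : ℝ) + |(lam j : ℝ)|)) := by
      apply mul_nonneg hd.le
      apply mul_nonneg <;> nlinarith
    nlinarith [key, hB2, hd, hAB, hB]
  · -- not last column
    have htj : ((tildeD r lam j : ℤ) : ℝ) = (lam j : ℝ) := by simp [tildeD, h]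
    have hBA : (lam j : ℝ) ≤ (lam i : ℝ) := by exact_mod_cast (hlam i j hij).2 h
    have hB0 : (0 : ℝ) ≤ (lam j : ℝ) := by
      have hjlt : j < (⟨r - 1, by omega⟩ : Fin r) := by
        show (j : ℕ) < r - 1; omega
      have := (hlam j ⟨r - 1, by omega⟩ hjlt).1 (by simp; omega)
      have h0 : (0 : ℤ) ≤ lam j := le_trans (abs_nonneg _) this
      exact_mod_cast h0
    have hD : (0 : ℝ) < 2 * (r : ℝ) - (((i : ℕ) : ℝ) + 1) - (((j : ℕ) : ℝ) + 1) := by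
      have h1 : ((i : ℕ) : ℝ) + 1 ≤ ((j : ℕ) : ℝ) := by exact_mod_cast hij'
      have h2 : ((j : ℕ) : ℝ) + 2 ≤ (r : ℝ) := by exact_mod_cast (by omega : (j : ℕ) + 2 ≤ r)
      linarith
    rw [htj, div_le_div_iff₀ hd (by positivity)]
    nlinarith [mul_nonneg (mul_nonneg hd.le
        (by linarith : (0:ℝ) ≤ (lam i : ℝ) - (lam j : ℝ) + (((j : ℕ) : ℝ) - ((i : ℕ) : ℝ))))
        (by linarith : (0:ℝ) ≤ (lam i : ℝ) + (lam j : ℝ))]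

/-- For a dominant weight `λ` of type `D_r` (`r ≥ 2`), the dimension
`d_λ^D = ∏_{1≤i<j≤r} ((λ_i - λ_j + j - i)(λ_i + λ_j + 2r - i - j))/((j - i)(2r - i - j))`
of the irreducible representation of `SO(2r)` with highest weight `λ` is at least
`∏_{1≤i<j≤r} (λ̃_i - λ̃_j + j - i)/(j - i)` where `λ̃ = (λ_1, …, λ_{r-1}, |λ_r|)`
(indices here are 0-based). -/

theorem dim_D_ge_dim_A (r : ℕ) (hr : 2 ≤ r) (lam : Fin r → ℤ) (hlam : IsDominantD r lam) :
    (∏ i : Fin r, ∏ j ∈ Finset.Ioi i,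
        (((tildeD r lam i : ℝ) - (tildeD r lam j : ℝ) + ((j : ℕ) : ℝ) - ((i : ℕ) : ℝ)) /
          (((j : ℕ) : ℝ) - ((i : ℕ) : ℝ))))
      ≤ ∏ i : Fin r, ∏ j ∈ Finset.Ioi i,
          ((((lam i : ℝ) - (lam j : ℝ) + ((j : ℕ) : ℝ) - ((i : ℕ) : ℝ)) *
              ((lam i : ℝ) + (lam j : ℝ) + 2 * (r : ℝ) - (((i : ℕ) : ℝ) + 1) -
                (((j : ℕ) : ℝ) + 1))) /
            ((((j : ℕ) : ℝ) - ((i : ℕ) : ℝ)) *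
              (2 * (r : ℝ) - (((i : ℕ) : ℝ) + 1) - (((j : ℕ) : ℝ) + 1)))) := by
  refine Finset.prod_le_prod (fun i _ => Finset.prod_nonneg fun j hj =>
      tilde_term_nonneg r lam hlam i j (Finset.mem_Ioi.mp hj))
    (fun i _ => Finset.prod_le_prod
      (fun j hj => tilde_term_nonneg r lam hlam i j (Finset.mem_Ioi.mp hj))
      (fun j hj => term_le r lam hlam i j (Finset.mem_Ioi.mp hj)))
end

section
/- Let r ≥ 1 be an integer, let z_1, …, z_r be nonzero complex numbers, let m_1, …, m_r ∈ ℤ and let k be a positive integer. Then Σ_{ℓ=1}^r (z_ℓ^k + z_ℓ^{−k}) · det[(z_i^{m_j} − z_i^{−m_j})_{1≤i,j≤r}] = Σ_{ℓ=1}^r ( det[(z_i^{m_j + k δ_{jℓ}} − z_i^{−(m_j + k δ_{jℓ})})_{1≤i,j≤r}] + det[(z_i^{m_j − k δ_{jℓ}} − z_i^{−(m_j − k δ_{jℓ})})_{1≤i,j≤r}] ), where δ_{jℓ} is the Kronecker delta. -/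
open Matrix in
lemma sum_det_updateCol_mul {r : ℕ} (A : Matrix (Fin r) (Fin r) ℂ) (d : Fin r → ℂ) :
    ∑ l : Fin r, (A.updateCol l (fun i => d i * A i l)).det
      = (∑ i : Fin r, d i) * A.det := by
  have h : ∀ l : Fin r, (A.updateCol l (fun i => d i * A i l)).det
      = ∑ i : Fin r, A.adjugate l i * (d i * A i l) := fun l => by
    rw [← Matrix.cramer_apply, Matrix.cramer_eq_adjugate_mulVec]
    rfl
  simp only [h]
  rw [Finset.sum_comm]
  have h2 : ∀ i : Fin r, (A * A.adjugate) i i = A.det := fun i => by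
    rw [Matrix.mul_adjugate]; simp
  calc ∑ i : Fin r, ∑ l : Fin r, A.adjugate l i * (d i * A i l)
      = ∑ i : Fin r, d i * (A * A.adjugate) i i := by
        refine Finset.sum_congr rfl fun i _ => ?_
        rw [Matrix.mul_apply, Finset.mul_sum]
        exact Finset.sum_congr rfl fun l _ => by ring
    _ = (∑ i : Fin r, d i) * A.det := by
        rw [Finset.sum_mul]; exact Finset.sum_congr rfl fun i _ => by rw [h2 i]

/-- The identity of alternants: for nonzero complex numbers `z_1, …, z_r`, integers
`m_1, …, m_r` and a positive integer `k`,
`Σ_{ℓ=1}^r (z_ℓ^k + z_ℓ^{-k}) · det[(z_i^{m_j} - z_i^{-m_j})]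
  = Σ_{ℓ=1}^r (det[(z_i^{m_j + kδ_{jℓ}} - z_i^{-(m_j + kδ_{jℓ})})]
    + det[(z_i^{m_j - kδ_{jℓ}} - z_i^{-(m_j - kδ_{jℓ})})])`. -/
theorem alternant_det_identity (r : ℕ) (hr : 1 ≤ r) (z : Fin r → ℂ) (hz : ∀ i, z i ≠ 0)
    (m : Fin r → ℤ) (k : ℕ) (hk : 0 < k) :
    ∑ l : Fin r, (z l ^ (k : ℤ) + z l ^ (-(k : ℤ))) *
        Matrix.det (Matrix.of fun i j : Fin r => z i ^ (m j) - z i ^ (-(m j)))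
      = ∑ l : Fin r,
          (Matrix.det (Matrix.of fun i j : Fin r =>
              z i ^ (m j + if j = l then (k : ℤ) else 0) -
                z i ^ (-(m j + if j = l then (k : ℤ) else 0))) +
            Matrix.det (Matrix.of fun i j : Fin r =>
              z i ^ (m j - if j = l then (k : ℤ) else 0) -
                z i ^ (-(m j - if j = l then (k : ℤ) else 0)))) := by
  set A : Matrix (Fin r) (Fin r) ℂ :=
    Matrix.of fun i j : Fin r => z i ^ (m j) - z i ^ (-(m j)) with hA
  set d : Fin r → ℂ := fun i => z i ^ (k : ℤ) + z i ^ (-(k : ℤ)) with hd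
  have key : ∀ l : Fin r,
      (Matrix.det (Matrix.of fun i j : Fin r =>
          z i ^ (m j + if j = l then (k : ℤ) else 0) -
            z i ^ (-(m j + if j = l then (k : ℤ) else 0))) +
        Matrix.det (Matrix.of fun i j : Fin r =>
          z i ^ (m j - if j = l then (k : ℤ) else 0) -
            z i ^ (-(m j - if j = l then (k : ℤ) else 0))))
      = (A.updateCol l (fun i => d i * A i l)).det := by
    intro l
    have e1 : (Matrix.of fun i j : Fin r =>
        z i ^ (m j + if j = l then (k : ℤ) else 0) -
          z i ^ (-(m j + if j = l then (k : ℤ) else 0)))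
        = A.updateCol l (fun i => z i ^ (m l + (k : ℤ)) - z i ^ (-(m l + (k : ℤ)))) := by
      ext i j
      rw [Matrix.updateCol_apply]
      by_cases h : j = l <;> simp [h, hA]
    have e2 : (Matrix.of fun i j : Fin r =>
        z i ^ (m j - if j = l then (k : ℤ) else 0) -
          z i ^ (-(m j - if j = l then (k : ℤ) else 0)))
        = A.updateCol l (fun i => z i ^ (m l - (k : ℤ)) - z i ^ (-(m l - (k : ℤ)))) := by
      ext i j
      rw [Matrix.updateCol_apply]
      by_cases h : j = l <;> simp [h, hA]
    rw [e1, e2, ← Matrix.det_updateCol_add]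
    have hcol : ((fun i => z i ^ (m l + (k : ℤ)) - z i ^ (-(m l + (k : ℤ)))) +
        fun i => z i ^ (m l - (k : ℤ)) - z i ^ (-(m l - (k : ℤ))))
        = fun i => d i * A i l := by
      funext i
      have hzi := hz i
      simp only [Pi.add_apply, hd, hA, Matrix.of_apply]
      rw [show -(m l + (k : ℤ)) = -m l + -(k : ℤ) by ring,
        show m l - (k : ℤ) = m l + -(k : ℤ) by ring,
        show -(m l + -(k : ℤ)) = -m l + (k : ℤ) by ring,
        zpow_add₀ hzi, zpow_add₀ hzi, zpow_add₀ hzi, zpow_add₀ hzi]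
      ring
    rw [hcol]
  calc ∑ l : Fin r, (z l ^ (k : ℤ) + z l ^ (-(k : ℤ))) * A.det
      = (∑ i : Fin r, d i) * A.det := by rw [Finset.sum_mul]
    _ = ∑ l : Fin r, (A.updateCol l (fun i => d i * A i l)).det :=
        (sum_det_updateCol_mul A d).symm
    _ = _ := by
        refine Finset.sum_congr rfl fun l _ => ?_
        rw [key l]
end
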